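/- Let (M⁴, g, f) be a four-dimensional gradient Ricci soliton (Ric + ∇²f = λ g for some constant λ). There exists a universal positive constant A₀ (independent of the soliton) such that at any point q ∈ M where ∇f ≠ 0, one has |Rm|(q) ≤ A₀ ( |Ric|(q) + |∇Ric|(q)/|∇f|(q) ). -/

import Mathlib

/-!
In an orthonormal frame `e₀, …, e₃` with `e₀ = ∇f / |∇f|` the soliton identity reads
`|∇f| R_{abe0} = R_{eb,a} - R_{ea,b}`, so every component of `Rm` with an index `0` is at most
`2 |∇Ric| / |∇f|`. The components tangent to `e₀^⊥` have the symmetries of a curvature tensor on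
a three-dimensional space, with Ricci tensor `Ric_{ab} - R_{a00b}`. In dimension three such a
tensor is determined by its Ricci tensor (`Ric_{ab} = R_{aeeb}` for distinct `a, e, b`, and
`2 R_{aeea} = Ric_{aa} + Ric_{ee} - Ric_{mm}`), which bounds these components by a multiple of
`|Ric| + |∇Ric| / |∇f|`. Orthogonal frame changes preserve all the norms involved.
-/

open Finset Matrix

section FrameChange

variable {ι : Type*} [Fintype ι]

def ricci (R : ι → ι → ι → ι → ℝ) (i j : ι) : ℝ :=
  ∑ k, R i k k j

/- Components of a tensor in the frame formed by the rows of `O`. -/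

def frameChange₂ (O : Matrix ι ι ℝ) (M : ι → ι → ℝ) (i j : ι) : ℝ :=
  ∑ p, ∑ q, O i p * O j q * M p q

def frameChange₃ (O : Matrix ι ι ℝ) (T : ι → ι → ι → ℝ) (i j k : ι) : ℝ :=
  ∑ p, ∑ q, ∑ r, O i p * O j q * O k r * T p q r

def frameChange₄ (O : Matrix ι ι ℝ) (R : ι → ι → ι → ι → ℝ) (i j k l : ι) : ℝ :=
  ∑ p, ∑ q, ∑ r, ∑ s, O i p * O j q * O k r * O l s * R p q r s

theorem frameChange₂_eq_sum (O : Matrix ι ι ℝ) (M : ι → ι → ℝ) (i j : ι) :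
    frameChange₂ O M i j = ∑ p, O i p * (O *ᵥ M p) j := by
  simp only [frameChange₂, mulVec, dotProduct, mul_sum, mul_assoc]

theorem frameChange₃_eq_sum (O : Matrix ι ι ℝ) (T : ι → ι → ι → ℝ) (i j k : ι) :
    frameChange₃ O T i j k = ∑ p, O i p * frameChange₂ O (T p) j k := by
  simp only [frameChange₃, frameChange₂, mul_sum, mul_assoc]

theorem frameChange₄_eq_sum (O : Matrix ι ι ℝ) (R : ι → ι → ι → ι → ℝ) (i j k l : ι) :
    frameChange₄ O R i j k l = ∑ p, O i p * frameChange₃ O (R p) j k l := by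
  simp only [frameChange₄, frameChange₃, mul_sum, mul_assoc]

theorem frameChange₄_soliton_identity {O : Matrix ι ι ℝ} {D : ι → ι → ι → ℝ}
    {R : ι → ι → ι → ι → ℝ} {v : ι → ℝ} (h : ∀ i k l, D i k l - D l k i = ∑ j, R i l k j * v j)
    {c : ℝ} {m : ι} (hv : ∀ s, v s = c * O m s) (a b e : ι) :
    c * frameChange₄ O R a b e m = frameChange₃ O D a e b - frameChange₃ O D b e a :=
  calc c * frameChange₄ O R a b e m
      = ∑ p, ∑ q, ∑ r, O a p * O b q * O e r * ∑ s, R p q r s * v s := by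
        simp only [frameChange₄, hv, mul_sum]
        exact sum_congr rfl fun p _ => sum_congr rfl fun q _ => sum_congr rfl fun r _ =>
          sum_congr rfl fun s _ => by ring
    _ = ∑ p, ∑ q, ∑ r, O a p * O b q * O e r * (D p r q - D q r p) := by simp only [h]
    _ = frameChange₃ O D a e b - frameChange₃ O D b e a := by
        simp only [frameChange₃, mul_sub, sum_sub_distrib]
        congr 1
        · exact sum_congr rfl fun p _ => sum_comm.trans <| sum_congr rfl fun r _ =>
            sum_congr rfl fun q _ => by ring
        · exact sum_comm.trans <| sum_congr rfl fun q _ => sum_comm.trans <|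
            sum_congr rfl fun r _ => sum_congr rfl fun p _ => by ring

theorem sqrt_sum_sq_le_of_abs_le {R : ι → ι → ι → ι → ℝ} {K : ℝ}
    (h : ∀ i j k l, |R i j k l| ≤ K) :
    √(∑ i, ∑ j, ∑ k, ∑ l, R i j k l ^ 2) ≤ Fintype.card ι ^ 2 * K := by
  have hK : 0 ≤ Fintype.card ι ^ 2 * K := by
    rcases isEmpty_or_nonempty ι with hι | ⟨⟨i⟩⟩
    · simp
    · exact mul_nonneg (by positivity) ((abs_nonneg _).trans (h i i i i))
  rw [Real.sqrt_le_left hK]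
  calc ∑ i, ∑ j, ∑ k, ∑ l, R i j k l ^ 2 ≤ ∑ i : ι, ∑ j : ι, ∑ k : ι, ∑ l : ι, K ^ 2 := by
        refine sum_le_sum fun i _ => sum_le_sum fun j _ => sum_le_sum fun k _ =>
          sum_le_sum fun l _ => ?_
        exact sq_le_sq' (abs_le.mp (h i j k l)).1 (abs_le.mp (h i j k l)).2
    _ = (Fintype.card ι ^ 2 * K) ^ 2 := by simp only [sum_const, card_univ, nsmul_eq_mul]; ring

variable [DecidableEq ι] {O : Matrix ι ι ℝ}

theorem sum_sq_mulVec_of_mem_orthogonalGroup (hO : O ∈ orthogonalGroup ι ℝ) (x : ι → ℝ) :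
    ∑ i, (O *ᵥ x) i ^ 2 = ∑ i, x i ^ 2 := by
  have hsq (y : ι → ℝ) : ∑ i, y i ^ 2 = y ⬝ᵥ y := by simp only [dotProduct, sq]
  rw [hsq, hsq, dotProduct_mulVec, ← vecMul_transpose, vecMul_vecMul,
    (mem_orthogonalGroup_iff' _ _).mp hO, vecMul_one]

theorem sum_sum_sq_sum_mul_of_mem_orthogonalGroup {α : Type*} [Fintype α]
    (hO : O ∈ orthogonalGroup ι ℝ) (y : ι → α → ℝ) :
    ∑ i, ∑ a, (∑ p, O i p * y p a) ^ 2 = ∑ p, ∑ a, y p a ^ 2 := by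
  rw [sum_comm, sum_comm (s := univ (α := ι))]
  exact sum_congr rfl fun a _ => sum_sq_mulVec_of_mem_orthogonalGroup hO fun p => y p a

theorem sum_sq_frameChange₂ (hO : O ∈ orthogonalGroup ι ℝ) (M : ι → ι → ℝ) :
    ∑ i, ∑ j, frameChange₂ O M i j ^ 2 = ∑ p, ∑ q, M p q ^ 2 := by
  simp only [frameChange₂_eq_sum, sum_sum_sq_sum_mul_of_mem_orthogonalGroup hO]
  exact sum_congr rfl fun p _ => sum_sq_mulVec_of_mem_orthogonalGroup hO (M p)

theorem sum_sq_frameChange₃ (hO : O ∈ orthogonalGroup ι ℝ) (T : ι → ι → ι → ℝ) :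
    ∑ i, ∑ j, ∑ k, frameChange₃ O T i j k ^ 2 = ∑ p, ∑ q, ∑ r, T p q r ^ 2 := by
  have := sum_sum_sq_sum_mul_of_mem_orthogonalGroup hO
    fun p (x : ι × ι) => frameChange₂ O (T p) x.1 x.2
  simp only [Fintype.sum_prod_type, ← frameChange₃_eq_sum] at this
  rw [this]
  exact sum_congr rfl fun p _ => sum_sq_frameChange₂ hO (T p)

theorem sum_sq_frameChange₄ (hO : O ∈ orthogonalGroup ι ℝ) (R : ι → ι → ι → ι → ℝ) :
    ∑ i, ∑ j, ∑ k, ∑ l, frameChange₄ O R i j k l ^ 2 = ∑ p, ∑ q, ∑ r, ∑ s, R p q r s ^ 2 := by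
  have := sum_sum_sq_sum_mul_of_mem_orthogonalGroup hO
    fun p (x : ι × ι × ι) => frameChange₃ O (R p) x.1 x.2.1 x.2.2
  simp only [Fintype.sum_prod_type, ← frameChange₄_eq_sum] at this
  rw [this]
  exact sum_congr rfl fun p _ => sum_sq_frameChange₃ hO (R p)

theorem abs_frameChange₂_le (hO : O ∈ orthogonalGroup ι ℝ) (M : ι → ι → ℝ) (i j : ι) :
    |frameChange₂ O M i j| ≤ √(∑ p, ∑ q, M p q ^ 2) := by
  rw [← sum_sq_frameChange₂ hO]
  refine Real.abs_le_sqrt ?_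
  calc frameChange₂ O M i j ^ 2 ≤ ∑ q, frameChange₂ O M i q ^ 2 :=
        single_le_sum (f := fun q => frameChange₂ O M i q ^ 2) (fun _ _ => by positivity)
          (mem_univ j)
    _ ≤ _ := single_le_sum (f := fun p => ∑ q, frameChange₂ O M p q ^ 2)
        (fun _ _ => by positivity) (mem_univ i)

theorem abs_frameChange₃_le (hO : O ∈ orthogonalGroup ι ℝ) (T : ι → ι → ι → ℝ) (i j k : ι) :
    |frameChange₃ O T i j k| ≤ √(∑ p, ∑ q, ∑ r, T p q r ^ 2) := by
  rw [← sum_sq_frameChange₃ hO]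
  refine Real.abs_le_sqrt ?_
  calc frameChange₃ O T i j k ^ 2 ≤ ∑ r, frameChange₃ O T i j r ^ 2 :=
        single_le_sum (f := fun r => frameChange₃ O T i j r ^ 2) (fun _ _ => by positivity)
          (mem_univ k)
    _ ≤ ∑ q, ∑ r, frameChange₃ O T i q r ^ 2 :=
        single_le_sum (f := fun q => ∑ r, frameChange₃ O T i q r ^ 2)
          (fun _ _ => by positivity) (mem_univ j)
    _ ≤ _ := single_le_sum (f := fun p => ∑ q, ∑ r, frameChange₃ O T p q r ^ 2)
        (fun _ _ => by positivity) (mem_univ i)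

theorem abs_frameChange₄_le_of_soliton_identity (hO : O ∈ orthogonalGroup ι ℝ)
    {D : ι → ι → ι → ℝ} {R : ι → ι → ι → ι → ℝ} {v : ι → ℝ}
    (h : ∀ i k l, D i k l - D l k i = ∑ j, R i l k j * v j) {c : ℝ} (hc : 0 < c) {m : ι}
    (hv : ∀ s, v s = c * O m s) (a b e : ι) :
    |frameChange₄ O R a b e m| ≤ 2 * √(∑ p, ∑ q, ∑ r, D p q r ^ 2) / c := by
  rw [le_div_iff₀ hc, mul_comm, ← abs_of_pos hc, ← abs_mul, frameChange₄_soliton_identity h hv]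
  linarith [abs_sub (frameChange₃ O D a e b) (frameChange₃ O D b e a),
    abs_frameChange₃_le hO D a e b, abs_frameChange₃_le hO D b e a]

theorem ricci_frameChange₄ (hO : O ∈ orthogonalGroup ι ℝ) (R : ι → ι → ι → ι → ℝ) :
    ricci (frameChange₄ O R) = frameChange₂ O (ricci R) := by
  have hδ (q r : ι) : ∑ k, O k q * O k r = if q = r then 1 else 0 := by
    simpa [mul_apply, one_apply] using
      congrFun (congrFun ((mem_orthogonalGroup_iff' _ _).mp hO) q) r
  ext i j
  calc ricci (frameChange₄ O R) i j
      = ∑ p, ∑ q, ∑ r, (∑ k, O k q * O k r) * ∑ s, O i p * O j s * R p q r s := by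
        simp only [ricci, frameChange₄, sum_mul]
        refine sum_comm.trans <| sum_congr rfl fun p _ => ?_
        refine sum_comm.trans <| sum_congr rfl fun q _ => ?_
        refine sum_comm.trans <| sum_congr rfl fun r _ => sum_congr rfl fun k _ => ?_
        rw [mul_sum]
        exact sum_congr rfl fun s _ => by ring
    _ = ∑ p, ∑ q, ∑ s, O i p * O j s * R p q q s := by
        simp only [hδ, ite_mul, one_mul, zero_mul, sum_ite_eq, mem_univ, if_true]
    _ = frameChange₂ O (ricci R) i j := by
        simp only [frameChange₂, ricci, mul_sum]
        exact sum_congr rfl fun p _ => sum_comm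

theorem exists_mem_orthogonalGroup_row_eq (i₀ : ι) {v : ι → ℝ} (hv : ∑ j, v j ^ 2 = 1) :
    ∃ O ∈ orthogonalGroup ι ℝ, O i₀ = v := by
  have hV : Orthonormal ℝ (({i₀} : Set ι).domRestrict fun _ => WithLp.toLp 2 v) := by
    rw [orthonormal_subsingleton_iff]
    intro _
    simp [EuclideanSpace.norm_eq, hv]
  obtain ⟨b, hb⟩ := hV.exists_orthonormalBasis_extension_of_card_eq (by simp)
  have hM := (EuclideanSpace.basisFun ι ℝ).toMatrix_orthonormalBasis_mem_orthogonal b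
  refine ⟨((EuclideanSpace.basisFun ι ℝ).toBasis.toMatrix b.toBasis)ᵀ, ?_, ?_⟩
  · rw [mem_orthogonalGroup_iff', transpose_transpose]
    exact (mem_orthogonalGroup_iff _ _).mp hM
  · ext j
    simp [Module.Basis.toMatrix_apply, hb i₀ rfl]

theorem exists_mem_orthogonalGroup_mul_row_eq (i₀ : ι) (v : ι → ℝ) :
    ∃ O ∈ orthogonalGroup ι ℝ, ∀ s, v s = √(∑ j, v j ^ 2) * O i₀ s := by
  rcases eq_or_ne v 0 with rfl | hv
  · exact ⟨1, one_mem _, fun s => by simp⟩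
  have hsum : 0 < ∑ j, v j ^ 2 := by
    obtain ⟨j, hj⟩ := Function.ne_iff.mp hv
    exact sum_pos' (fun _ _ => sq_nonneg _) ⟨j, mem_univ j, pow_two_pos_of_ne_zero hj⟩
  obtain ⟨O, hO, hrow⟩ := exists_mem_orthogonalGroup_row_eq i₀
    (v := fun j => v j / √(∑ j, v j ^ 2)) <| by
      simp only [div_pow, ← sum_div, Real.sq_sqrt hsum.le]
      exact div_self hsum.ne'
  refine ⟨O, hO, fun s => ?_⟩
  rw [hrow]
  field_simp

end FrameChange

theorem sum_fin_three_eq_of_ne {M : Type*} [AddCommMonoid M] {a b c : Fin 3} (hab : a ≠ b)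
    (hac : a ≠ c) (hbc : b ≠ c) (f : Fin 3 → M) : ∑ n, f n = f a + f b + f c := by
  have huniv : ({a, b, c} : Finset (Fin 3)) = univ :=
    eq_univ_of_card _ (by rw [card_insert_of_notMem (by simp [hab, hac]), card_pair hbc]; rfl)
  rw [← huniv, sum_insert (by simp [hab, hac]), sum_pair hbc, add_assoc]

structure HasCurvatureSymmetries {ι : Type*} (R : ι → ι → ι → ι → ℝ) : Prop where
  antisymm_left : ∀ i j k l, R i j k l = -R j i k l
  antisymm_right : ∀ i j k l, R i j k l = -R i j l k
  symm_pairs : ∀ i j k l, R i j k l = R k l i j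

namespace HasCurvatureSymmetries

variable {ι : Type*} {R : ι → ι → ι → ι → ℝ}

theorem apply_self_left (hR : HasCurvatureSymmetries R) (i k l : ι) : R i i k l = 0 := by
  linarith [hR.antisymm_left i i k l]

theorem apply_self_right (hR : HasCurvatureSymmetries R) (i j k : ι) : R i j k k = 0 := by
  linarith [hR.antisymm_right i j k k]

theorem comp (hR : HasCurvatureSymmetries R) {κ : Type*} (f : κ → ι) :
    HasCurvatureSymmetries fun a b c d => R (f a) (f b) (f c) (f d) where
  antisymm_left _ _ _ _ := hR.antisymm_left _ _ _ _
  antisymm_right _ _ _ _ := hR.antisymm_right _ _ _ _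
  symm_pairs _ _ _ _ := hR.symm_pairs _ _ _ _

theorem frameChange₄ [Fintype ι] (hR : HasCurvatureSymmetries R) (O : Matrix ι ι ℝ) :
    HasCurvatureSymmetries (frameChange₄ O R) where
  antisymm_left i j k l := by
    simp only [_root_.frameChange₄, ← sum_neg_distrib]
    refine sum_comm.trans <| sum_congr rfl fun q _ => sum_congr rfl fun p _ =>
      sum_congr rfl fun r _ => sum_congr rfl fun s _ => ?_
    rw [hR.antisymm_left]; ring
  antisymm_right i j k l := by
    simp only [_root_.frameChange₄, ← sum_neg_distrib]
    refine sum_congr rfl fun p _ => sum_congr rfl fun q _ => sum_comm.trans <|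
      sum_congr rfl fun s _ => sum_congr rfl fun r _ => ?_
    rw [hR.antisymm_right]; ring
  symm_pairs i j k l := by
    simp only [_root_.frameChange₄, ← Fintype.sum_prod_type']
    refine Fintype.sum_equiv ((Equiv.prodAssoc ι ι (ι × ι)).symm.trans
      ((Equiv.prodComm _ _).trans (Equiv.prodAssoc ι ι (ι × ι)))) _ _ fun x => ?_
    simp only [Equiv.trans_apply, Equiv.prodAssoc_symm_apply, Equiv.prodComm_apply,
      Prod.swap_prod_mk, Equiv.prodAssoc_apply]
    rw [hR.symm_pairs]; ring

section FinThree

variable {S : Fin 3 → Fin 3 → Fin 3 → Fin 3 → ℝ}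

theorem ricci_eq_of_fin_three (hS : HasCurvatureSymmetries S) {a e b : Fin 3} (hae : a ≠ e)
    (hab : a ≠ b) (heb : e ≠ b) : ricci S a b = S a e e b := by
  rw [ricci, sum_fin_three_eq_of_ne hae hab heb, hS.apply_self_left, hS.apply_self_right]
  ring

theorem two_mul_apply_eq_of_fin_three (hS : HasCurvatureSymmetries S) {a e m : Fin 3}
    (hae : a ≠ e) (ham : a ≠ m) (hem : e ≠ m) :
    2 * S a e e a = ricci S a a + ricci S e e - ricci S m m := by
  simp only [ricci, sum_fin_three_eq_of_ne hae ham hem, hS.apply_self_left]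
  linarith [hS.symm_pairs e a a e, hS.symm_pairs m a a m, hS.symm_pairs m e e m]

theorem abs_le_of_fin_three (hS : HasCurvatureSymmetries S) {r : ℝ}
    (hric : ∀ a b, |ricci S a b| ≤ r) (i j k l : Fin 3) : |S i j k l| ≤ 3 / 2 * r := by
  have hr : 0 ≤ r := (abs_nonneg _).trans (hric 0 0)
  have hcanon (a e b : Fin 3) : |S a e e b| ≤ 3 / 2 * r := by
    rcases eq_or_ne a e with rfl | hae
    · rw [hS.apply_self_left, abs_zero]; positivity
    rcases eq_or_ne e b with rfl | heb
    · rw [hS.apply_self_right, abs_zero]; positivity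
    rcases eq_or_ne a b with rfl | hab
    · obtain ⟨m, ham, hem⟩ : ∃ m, a ≠ m ∧ e ≠ m := by revert a e; decide
      have h := hS.two_mul_apply_eq_of_fin_three hae ham hem
      have ha := abs_le.mp (hric a a)
      have he := abs_le.mp (hric e e)
      have hm := abs_le.mp (hric m m)
      rw [abs_le]; constructor <;> linarith
    · rw [← hS.ricci_eq_of_fin_three hae hab heb]; linarith [hric a b]
  rcases eq_or_ne i j with rfl | hij
  · rw [hS.apply_self_left, abs_zero]; positivity
  rcases eq_or_ne k l with rfl | hkl
  · rw [hS.apply_self_right, abs_zero]; positivity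
  obtain rfl | rfl | rfl | rfl : i = k ∨ i = l ∨ j = k ∨ j = l := by
    revert i j k l; decide
  · rw [hS.antisymm_left, abs_neg]; exact hcanon j i l
  · rw [hS.antisymm_left, hS.antisymm_right, neg_neg]; exact hcanon j i k
  · exact hcanon i j l
  · rw [hS.antisymm_right, abs_neg]; exact hcanon i j k

end FinThree

theorem abs_le_of_fin_four {R : Fin 4 → Fin 4 → Fin 4 → Fin 4 → ℝ}
    (hR : HasCurvatureSymmetries R) {ρ β : ℝ} (hric : ∀ a b, |ricci R a b| ≤ ρ)
    (hzero : ∀ a b e, |R a b e 0| ≤ β) (i j k l : Fin 4) : |R i j k l| ≤ 3 / 2 * (ρ + β) := by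
  have hρ : 0 ≤ ρ := (abs_nonneg _).trans (hric 0 0)
  by_cases h0 : i = 0 ∨ j = 0 ∨ k = 0 ∨ l = 0
  · have : |R i j k l| ≤ β := by
      rcases h0 with rfl | rfl | rfl | rfl
      · rw [hR.symm_pairs, hR.antisymm_right, abs_neg]; exact hzero k l j
      · rw [hR.symm_pairs]; exact hzero k l i
      · rw [hR.antisymm_right, abs_neg]; exact hzero i j l
      · exact hzero i j k
    linarith [(abs_nonneg _).trans this]
  obtain ⟨hi, hj, hk, hl⟩ : i ≠ 0 ∧ j ≠ 0 ∧ k ≠ 0 ∧ l ≠ 0 := by simpa only [not_or] using h0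
  obtain ⟨i, rfl⟩ := Fin.exists_succ_eq.mpr hi
  obtain ⟨j, rfl⟩ := Fin.exists_succ_eq.mpr hj
  obtain ⟨k, rfl⟩ := Fin.exists_succ_eq.mpr hk
  obtain ⟨l, rfl⟩ := Fin.exists_succ_eq.mpr hl
  refine (hR.comp Fin.succ).abs_le_of_fin_three (fun a b => ?_) i j k l
  have hsplit : ricci (fun a b c d => R a.succ b.succ c.succ d.succ) a b
      = ricci R a.succ b.succ - R a.succ 0 0 b.succ := by
    simp only [ricci, Fin.sum_univ_succ (n := 3)]
    ring
  calc |ricci (fun a b c d => R a.succ b.succ c.succ d.succ) a b|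
      ≤ |ricci R a.succ b.succ| + |R a.succ 0 0 b.succ| := hsplit ▸ abs_sub _ _
    _ ≤ ρ + β := add_le_add (hric _ _) (by rw [hR.symm_pairs]; exact hzero 0 b.succ a.succ)

end HasCurvatureSymmetries

theorem dim4_gradient_soliton_Rm_le_Ric_add_gradRic :
    ∃ A₀ : ℝ, 0 < A₀ ∧
      ∀ (Rm : Fin 4 → Fin 4 → Fin 4 → Fin 4 → ℝ)
        (DRic : Fin 4 → Fin 4 → Fin 4 → ℝ) (gf : Fin 4 → ℝ),
        (∀ i j k l, Rm i j k l = -Rm j i k l) →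
        (∀ i j k l, Rm i j k l = -Rm i j l k) →
        (∀ i j k l, Rm i j k l = Rm k l i j) →
        (∀ i j k l, Rm i j k l + Rm j k i l + Rm k i j l = 0) →
        -- the gradient Ricci soliton identity `R_{kl,i} - R_{ki,l} = R_{ilkj} f_j`
        (∀ i k l, DRic i k l - DRic l k i = ∑ j, Rm i l k j * gf j) →
        gf ≠ 0 →
        Real.sqrt (∑ i, ∑ j, ∑ k, ∑ l, Rm i j k l ^ 2) ≤
          A₀ * (Real.sqrt (∑ i, ∑ j, (∑ k, Rm i k k j) ^ 2) +
            Real.sqrt (∑ i, ∑ k, ∑ l, DRic i k l ^ 2) /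
              Real.sqrt (∑ j, gf j ^ 2)) := by
  refine ⟨48, by norm_num, fun Rm DRic gf h₁ h₂ h₃ _ hsol hgf => ?_⟩
  obtain ⟨O, hO, hO₀⟩ := exists_mem_orthogonalGroup_mul_row_eq 0 gf
  have hc : 0 < √(∑ j, gf j ^ 2) := (Real.sqrt_nonneg _).lt_of_ne fun h =>
    hgf <| funext fun s => by rw [hO₀ s, ← h, zero_mul, Pi.zero_apply]
  have hR := (HasCurvatureSymmetries.mk h₁ h₂ h₃).frameChange₄ O
  have hric (a b : Fin 4) :
      |ricci (frameChange₄ O Rm) a b| ≤ √(∑ i, ∑ j, ricci Rm i j ^ 2) := by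
    rw [ricci_frameChange₄ hO]
    exact abs_frameChange₂_le hO _ a b
  calc √(∑ i, ∑ j, ∑ k, ∑ l, Rm i j k l ^ 2)
      = √(∑ i, ∑ j, ∑ k, ∑ l, frameChange₄ O Rm i j k l ^ 2) := by rw [sum_sq_frameChange₄ hO]
    _ ≤ Fintype.card (Fin 4) ^ 2 * (3 / 2 * (√(∑ i, ∑ j, ricci Rm i j ^ 2) +
          2 * √(∑ i, ∑ k, ∑ l, DRic i k l ^ 2) / √(∑ j, gf j ^ 2))) :=
        sqrt_sum_sq_le_of_abs_le <| hR.abs_le_of_fin_four hric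
          (abs_frameChange₄_le_of_soliton_identity hO hsol hc hO₀)
    _ ≤ 48 * (√(∑ i, ∑ j, ricci Rm i j ^ 2) +
          √(∑ i, ∑ k, ∑ l, DRic i k l ^ 2) / √(∑ j, gf j ^ 2)) := by
        rw [Fintype.card_fin, mul_div_assoc]
        linarith [Real.sqrt_nonneg (∑ i, ∑ j, ricci Rm i j ^ 2)]
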